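/- Let f : [0,1]^n × Y → ℝ be L-Lipschitz in its first argument (for all y), and fix λ > L and y. If x* minimizes x ↦ f(x,y) + λ·d(x) over a set C with [0,1]^n ∩ C closed under coordinatewise rounding (i.e., x ∈ C implies x̃ ∈ C), where d(x) = ‖x − x̃‖₁, then x* = x̃* and hence x* ∈ {0,1}^n. -/

import Mathlib

noncomputable def rnd {n : ℕ} (x : EuclideanSpace ℝ (Fin n)) :
    EuclideanSpace ℝ (Fin n) := WithLp.toLp 2 (fun i => (⌊x i + 1/2⌋ : ℝ))

noncomputable def dFun {n : ℕ} (x : EuclideanSpace ℝ (Fin n)) : ℝ :=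
  ∑ i, |x i - rnd x i|

lemma rnd_mem {t : ℝ} (ht : t ∈ Set.Icc (0:ℝ) 1) : ⌊t + 1/2⌋ = 0 ∨ ⌊t + 1/2⌋ = 1 := by
  obtain ⟨h0, h1⟩ := ht
  have hl : (0:ℤ) ≤ ⌊t + 1/2⌋ := by
    have : (0:ℝ) ≤ t + 1/2 := by linarith
    exact_mod_cast Int.le_floor.2 (by exact_mod_cast this)
  have hu : ⌊t + 1/2⌋ ≤ 1 := by
    have h2 : t + 1/2 ≤ 3/2 := by linarith
    have := Int.floor_le_floor h2
    simpa [show ⌊(3/2:ℝ)⌋ = 1 by norm_num] using this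
  omega

lemma rnd_rnd {n : ℕ} (x : EuclideanSpace ℝ (Fin n)) : rnd (rnd x) = rnd x := by
  ext i
  show ((⌊(⌊x i + 1/2⌋ : ℝ) + 1/2⌋ : ℤ) : ℝ) = _
  rw [add_comm, Int.floor_add_intCast, show ⌊(1/2:ℝ)⌋ = 0 by norm_num, zero_add]; rfl

lemma norm_le_dFun {n : ℕ} (v : EuclideanSpace ℝ (Fin n)) : ‖v‖ ≤ ∑ i, |v i| := by
  rw [EuclideanSpace.norm_eq]
  simp only [Real.norm_eq_abs, sq_abs]
  have h1 : ∑ i, v i ^ 2 ≤ (∑ i, |v i|) ^ 2 := by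
    have := Finset.sum_sq_le_sq_sum_of_nonneg (s := Finset.univ) (f := fun i => |v i|)
      (fun i _ => abs_nonneg _)
    simpa [sq_abs] using this
  calc Real.sqrt (∑ i, v i ^ 2) ≤ Real.sqrt ((∑ i, |v i|) ^ 2) := Real.sqrt_le_sqrt h1
    _ = ∑ i, |v i| := Real.sqrt_sq (Finset.sum_nonneg fun i _ => abs_nonneg _)

theorem stmt_7 {n : ℕ} {Y : Type*} (f : EuclideanSpace ℝ (Fin n) → Y → ℝ)
    (L lam : ℝ) (y : Y) (C : Set (EuclideanSpace ℝ (Fin n)))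
    (hLip : ∀ x₁ x₂ : EuclideanSpace ℝ (Fin n), (∀ i, x₁ i ∈ Set.Icc (0:ℝ) 1) →
      (∀ i, x₂ i ∈ Set.Icc (0:ℝ) 1) → |f x₁ y - f x₂ y| ≤ L * ‖x₁ - x₂‖)
    (hlam : L < lam)
    (hC : ∀ x ∈ C, (∀ i, x i ∈ Set.Icc (0:ℝ) 1) → rnd x ∈ C)
    (xstar : EuclideanSpace ℝ (Fin n))
    (hxs : ∀ i, xstar i ∈ Set.Icc (0:ℝ) 1) (hxsC : xstar ∈ C)
    (hmin : ∀ x ∈ C, (∀ i, x i ∈ Set.Icc (0:ℝ) 1) →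
      f xstar y + lam * dFun xstar ≤ f x y + lam * dFun x) :
    xstar = rnd xstar ∧ ∀ i, xstar i = 0 ∨ xstar i = 1 := by
  have hrmem : ∀ i, rnd xstar i ∈ Set.Icc (0:ℝ) 1 := by
    intro i
    rcases rnd_mem (hxs i) with h | h <;>
      · show ((⌊xstar i + 1/2⌋ : ℤ) : ℝ) ∈ Set.Icc (0:ℝ) 1
        rw [h]; norm_num
  have hrC : rnd xstar ∈ C := hC xstar hxsC hxs
  have hd0 : dFun (rnd xstar) = 0 := by
    unfold dFun
    rw [rnd_rnd]
    simp
  have hmin' := hmin (rnd xstar) hrC hrmem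
  rw [hd0] at hmin'
  have hLip' := hLip (rnd xstar) xstar hrmem hxs
  have hnorm : ‖rnd xstar - xstar‖ ≤ dFun xstar := by
    have := norm_le_dFun (rnd xstar - xstar)
    unfold dFun
    refine this.trans (le_of_eq ?_)
    apply Finset.sum_congr rfl
    intro i _
    rw [abs_sub_comm]
    rfl
  have key : lam * dFun xstar ≤ L * dFun xstar := by
    have h1 : lam * dFun xstar ≤ f (rnd xstar) y - f xstar y := by linarith
    have h2 : f (rnd xstar) y - f xstar y ≤ L * ‖rnd xstar - xstar‖ :=
      (le_abs_self _).trans hLip'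
    by_cases hL : 0 ≤ L
    · calc lam * dFun xstar ≤ L * ‖rnd xstar - xstar‖ := h1.trans h2
        _ ≤ L * dFun xstar := by nlinarith [norm_nonneg (rnd xstar - xstar)]
    · push_neg at hL
      have h3 : lam * dFun xstar ≤ L * ‖rnd xstar - xstar‖ := h1.trans h2
      have h4 : 0 ≤ L * ‖rnd xstar - xstar‖ := le_trans (abs_nonneg _) hLip'
      have h5 : ‖rnd xstar - xstar‖ = 0 := by nlinarith [norm_nonneg (rnd xstar - xstar)]
      have h6 : rnd xstar = xstar := by
        have := norm_eq_zero.1 h5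
        exact sub_eq_zero.1 this
      have h7 : dFun xstar = 0 := by simp [dFun, h6]
      rw [h7]; ring_nf; rfl
  have hdnn : 0 ≤ dFun xstar := Finset.sum_nonneg fun i _ => abs_nonneg _
  have hdeq : dFun xstar = 0 := by nlinarith
  have heq : xstar = rnd xstar := by
    ext i
    have : |xstar i - rnd xstar i| = 0 := by
      have := Finset.sum_eq_zero_iff_of_nonneg (s := Finset.univ)
        (f := fun i => |xstar i - rnd xstar i|) (fun i _ => abs_nonneg _) |>.1 hdeq i (Finset.mem_univ i)
      exact this
    have := abs_eq_zero.1 this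
    linarith
  refine ⟨heq, fun i => ?_⟩
  have hxi : xstar i = rnd xstar i := congrArg (fun v => v i) heq
  rcases rnd_mem (hxs i) with h | h
  · left
    rw [hxi]; show ((⌊xstar i + 1/2⌋:ℤ):ℝ) = 0; rw [h]; norm_num
  · right
    rw [hxi]; show ((⌊xstar i + 1/2⌋:ℤ):ℝ) = 1; rw [h]; norm_num
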